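/- Let ω be a weight function (continuous, increasing, ω(2t) ≤ L(ω(t)+1), log t = o(ω(t)), ω(e^t) convex), and let W_α^{(λ)} = exp(φ*_ω(λ|α|)/λ) with associated function ω_{W^{(λ)}}(t) = sup_{α: α_j=0 if t_j=0} log(|t^α|/W_α^{(λ)}) for t ∈ ℝ^d. Then λ·ω_{W^{(λ)}}(t) ≤ ω(|t|) for all t ∈ ℝ^d, and there exist B > 0 (independent of λ) and C_λ > 0 such that ω(|t|) ≤ B·λ·ω_{W^{(λ)}}(t) + C_λ for all t ∈ ℝ^d. -/

import Mathlib

open scoped BigOperators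

/-- The Young conjugate `φ*_ω(s) = sup_{t ≥ 0} (t s - ω(e^t))`. -/
noncomputable def youngConj (ω : ℝ → ℝ) (s : ℝ) : ℝ :=
  ⨆ t : {t : ℝ // 0 ≤ t}, ((t : ℝ) * s - ω (Real.exp (t : ℝ)))

/-- The weight matrix entry `W_α^{(λ)} = exp(φ*_ω(λ|α|)/λ)`. -/
noncomputable def Wmat (ω : ℝ → ℝ) (d : ℕ) (lam : ℝ) (α : Fin d → ℕ) : ℝ :=
  Real.exp (youngConj ω (lam * (∑ j, α j)) / lam)

/-- The associated function of the sequence `W^{(λ)}`: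
`ω_{W^{(λ)}}(t) = sup { log(|t^α|/W_α^{(λ)}) : α_j = 0 whenever t_j = 0 }`. -/
noncomputable def assocW (ω : ℝ → ℝ) (d : ℕ) (lam : ℝ)
    (t : EuclideanSpace ℝ (Fin d)) : ℝ :=
  ⨆ α : {α : Fin d → ℕ // ∀ j, t j = 0 → α j = 0},
    Real.log (|∏ j, (t j) ^ (α.1 j)| / Wmat ω d lam α.1)

/-! Write `φ(u) = ω(eᵘ)`. The upper bound is Young's inequality
`λ|α| log R ≤ φ*(λ|α|) + ω(R)` with `R = max |t| 1 ≥ |tⱼ|`.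
For the lower bound let `tⱼ` be a largest coordinate and `u = log |tⱼ|`. Convexity gives a
supporting slope `σ` of `φ` at `u`, hence `φ*(s) ≤ σu - φ(u)` for `0 ≤ s ≤ σ`; for `α = n eⱼ`
with `λn ∈ (σ - λ, σ]` this yields `λ ω_W(t) ≥ φ(u) - λu`, which is `≥ φ(u)/2` once `u` is
large, because `log = o(ω)`. Finally `|t| ≤ 2^d |tⱼ|`, and `d` doublings
`ω(2x) ≤ L(ω(x) + 1)` give `B = 2(2L)^d`. -/

open Filter Real

theorem ConvexOn.exists_forall_add_mul_sub_le {s : Set ℝ} {f : ℝ → ℝ} (hf : ConvexOn ℝ s f)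
    {x : ℝ} (hx : x ∈ interior s) : ∃ σ, ∀ y ∈ s, f x + σ * (y - x) ≤ f y := by
  obtain ⟨ε, hε, hball⟩ := Metric.mem_nhds_iff.1 (mem_interior_iff_mem_nhds.1 hx)
  have hleft : x - ε / 2 ∈ s := hball <| by
    rw [Metric.mem_ball, Real.dist_eq, abs_of_neg] <;> linarith
  have hright : x + ε / 2 ∈ s := hball <| by
    rw [Metric.mem_ball, Real.dist_eq, abs_of_pos] <;> linarith
  have hle : ∀ y ∈ s ∩ Set.Iio x, ∀ z ∈ s, x < z → slope f x y ≤ slope f x z :=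
    fun y hy z hz hxz => hf.slope_mono (interior_subset hx) ⟨hy.1, hy.2.ne⟩ ⟨hz, hxz.ne'⟩
      (hy.2.trans hxz).le
  have hbdd : BddAbove (slope f x '' (s ∩ Set.Iio x)) :=
    ⟨_, Set.forall_mem_image.2 fun z hz => hle z hz _ hright (by linarith)⟩
  refine ⟨sSup (slope f x '' (s ∩ Set.Iio x)), fun y hy => ?_⟩
  rcases lt_trichotomy y x with hyx | rfl | hxy
  · have h := le_csSup hbdd (Set.mem_image_of_mem (slope f x) ⟨hy, hyx⟩)
    rw [slope_def_field, div_le_iff_of_neg (sub_neg.2 hyx)] at h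
    linarith
  · simp
  · have hne : (s ∩ Set.Iio x).Nonempty := ⟨_, hleft, Set.mem_Iio.2 (by linarith)⟩
    have h := csSup_le (hne.image _) (Set.forall_mem_image.2 fun z hz => hle z hz y hy hxy)
    rw [slope_def_field, le_div_iff₀ (sub_pos.2 hxy)] at h
    linarith

theorem EuclideanSpace.exists_norm_le_sqrt_card_mul_abs {ι : Type*} [Fintype ι]
    {t : EuclideanSpace ℝ ι} (ht : t ≠ 0) : ∃ j, ‖t‖ ≤ √(Fintype.card ι) * |t j| := by
  have : Nonempty ι := by
    by_contra h
    exact ht (by ext i; exact ((not_nonempty_iff.1 h).false i).elim)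
  obtain ⟨j, hj⟩ := Finite.exists_max fun i => |t i|
  refine ⟨j, ?_⟩
  rw [EuclideanSpace.norm_eq, ← Real.sqrt_sq (abs_nonneg (t j)),
    ← Real.sqrt_mul (Nat.cast_nonneg _)]
  refine Real.sqrt_le_sqrt ?_
  calc ∑ i, ‖t i‖ ^ 2 ≤ ∑ _i : ι, |t j| ^ 2 :=
        Finset.sum_le_sum fun i _ => pow_le_pow_left₀ (norm_nonneg _) (hj i) 2
    _ = Fintype.card ι * |t j| ^ 2 := by simp

section Weight

variable {ω : ℝ → ℝ}

lemma apply_two_pow_mul_add_one_le (hnonneg : ∀ t, 0 ≤ t → 0 ≤ ω t) {L : ℝ} (hL : 1 ≤ L)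
    (hdb : ∀ t, 0 ≤ t → ω (2 * t) ≤ L * (ω t + 1)) (k : ℕ) {x : ℝ} (hx : 0 ≤ x) :
    ω (2 ^ k * x) + 1 ≤ (2 * L) ^ k * (ω x + 1) := by
  induction k with
  | zero => simp
  | succ k ih =>
    have hy : 0 ≤ 2 ^ k * x := by positivity
    have hωy := hnonneg _ hy
    calc ω (2 ^ (k + 1) * x) + 1 = ω (2 * (2 ^ k * x)) + 1 := by ring_nf
      _ ≤ 2 * L * (ω (2 ^ k * x) + 1) := by nlinarith [hdb _ hy]
      _ ≤ 2 * L * ((2 * L) ^ k * (ω x + 1)) := by gcongr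
      _ = (2 * L) ^ (k + 1) * (ω x + 1) := by ring

lemma eventually_mul_le_apply_exp (hnonneg : ∀ t, 0 ≤ t → 0 ≤ ω t)
    (hγ : (fun t => log t) =o[atTop] ω) {c : ℝ} (hc : 0 < c) :
    ∀ᶠ u in atTop, c * u ≤ ω (exp u) := by
  filter_upwards [tendsto_exp_atTop.eventually (hγ.def (inv_pos.2 hc))] with u hu
  rw [log_exp, Real.norm_eq_abs, Real.norm_of_nonneg (hnonneg _ (exp_pos u).le)] at hu
  calc c * u ≤ c * (c⁻¹ * ω (exp u)) := mul_le_mul_of_nonneg_left ((le_abs_self u).trans hu) hc.le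
    _ = ω (exp u) := by field_simp

lemma bddAbove_youngConj (hnonneg : ∀ t, 0 ≤ t → 0 ≤ ω t)
    (hγ : (fun t => log t) =o[atTop] ω) {s : ℝ} (hs : 0 ≤ s) :
    BddAbove (Set.range fun t : {t : ℝ // 0 ≤ t} => (t : ℝ) * s - ω (exp t)) := by
  obtain ⟨V, hV⟩ :=
    (eventually_mul_le_apply_exp hnonneg hγ (c := s + 1) (by linarith)).exists_forall_of_atTop
  refine ⟨max V 0 * s, ?_⟩
  rintro _ ⟨⟨u, hu⟩, rfl⟩
  have hωu := hnonneg _ (exp_pos u).le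
  rcases le_total V u with h | h
  · nlinarith [hV u h, le_max_right V 0]
  · nlinarith [le_max_left V 0]

lemma le_youngConj (hnonneg : ∀ t, 0 ≤ t → 0 ≤ ω t) (hγ : (fun t => log t) =o[atTop] ω)
    {s u : ℝ} (hs : 0 ≤ s) (hu : 0 ≤ u) : u * s - ω (exp u) ≤ youngConj ω s :=
  le_ciSup (bddAbove_youngConj hnonneg hγ hs) ⟨u, hu⟩

lemma youngConj_le {s a : ℝ} (h : ∀ u, 0 ≤ u → u * s - ω (exp u) ≤ a) : youngConj ω s ≤ a :=
  haveI : Nonempty {t : ℝ // 0 ≤ t} := ⟨⟨0, le_rfl⟩⟩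
  ciSup_le fun u => h u u.2

lemma youngConj_zero (hnonneg : ∀ t, 0 ≤ t → 0 ≤ ω t) (hω1 : ω 1 = 0)
    (hγ : (fun t => log t) =o[atTop] ω) : youngConj ω 0 = 0 :=
  le_antisymm (youngConj_le fun u _ => by simpa using hnonneg _ (exp_pos u).le)
    (by simpa [hω1] using le_youngConj hnonneg hγ le_rfl le_rfl)

/-- Discrete biconjugation: sampling `φ*` on the lattice `λℕ` recovers `φ(u)` up to `λu`. -/
lemma exists_nat_apply_exp_sub_le (hmono : Monotone ω)
    (hconv : ConvexOn ℝ (Set.Ici 0) (fun t => ω (exp t))) {lam u : ℝ} (hlam : 0 < lam)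
    (hu : 0 < u) : ∃ n : ℕ, ω (exp u) - lam * u ≤ lam * n * u - youngConj ω (lam * n) := by
  obtain ⟨σ, hσ⟩ := hconv.exists_forall_add_mul_sub_le (x := u) (by rwa [interior_Ici])
  have hσ0 : 0 ≤ σ := by
    have h0 := hσ 0 Set.self_mem_Ici
    have := hmono (exp_le_exp.2 hu.le)
    nlinarith
  refine ⟨⌊σ / lam⌋₊, ?_⟩
  set n := ⌊σ / lam⌋₊
  have hn_le : lam * n ≤ σ := (le_div_iff₀' hlam).1 (Nat.floor_le (by positivity))
  have hn_gt : σ < lam * (n + 1) := (div_lt_iff₀' hlam).1 (Nat.lt_floor_add_one _)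
  have hyc : youngConj ω (lam * n) ≤ σ * u - ω (exp u) := youngConj_le fun y hy => by
    have := hσ y hy
    nlinarith [mul_le_mul_of_nonneg_left hn_le hy]
  nlinarith [mul_le_mul_of_nonneg_right hn_gt.le hu.le]

end Weight

section AssociatedFunction

variable {ω : ℝ → ℝ} {d : ℕ} {lam : ℝ}

lemma prod_pow_ne_zero {ι : Type*} [Fintype ι] {t : ι → ℝ} {α : ι → ℕ}
    (hα : ∀ j, t j = 0 → α j = 0) : ∏ j, t j ^ α j ≠ 0 :=
  Finset.prod_ne_zero_iff.2 fun j _ => by by_cases h : t j = 0 <;> simp [h, hα]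

lemma mul_log_div_Wmat (hlam : 0 < lam) {t : EuclideanSpace ℝ (Fin d)} {α : Fin d → ℕ}
    (hα : ∀ j, t j = 0 → α j = 0) :
    lam * log (|∏ j, t j ^ α j| / Wmat ω d lam α)
      = lam * log |∏ j, t j ^ α j| - youngConj ω (lam * (∑ j, α j : ℕ)) := by
  rw [Wmat, Real.log_div (abs_ne_zero.2 (prod_pow_ne_zero hα)) (exp_pos _).ne', log_exp, mul_sub,
    mul_div_cancel₀ _ hlam.ne']

lemma mul_log_div_Wmat_le (hnonneg : ∀ t, 0 ≤ t → 0 ≤ ω t)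
    (hγ : (fun t => log t) =o[atTop] ω) (hlam : 0 < lam) (t : EuclideanSpace ℝ (Fin d))
    {α : Fin d → ℕ} (hα : ∀ j, t j = 0 → α j = 0) :
    lam * log (|∏ j, t j ^ α j| / Wmat ω d lam α) ≤ ω (max ‖t‖ 1) := by
  set R := max ‖t‖ 1
  have hR : 1 ≤ R := le_max_right _ _
  have hlog_le : ∀ j, log |t j| ≤ log R := fun j => by
    by_cases h : t j = 0
    · simpa [h] using log_nonneg hR
    · exact log_le_log (abs_pos.2 h) ((PiLp.norm_apply_le t j).trans (le_max_left _ _))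
  have hprod : log |∏ j, t j ^ α j| ≤ (∑ j, α j : ℕ) * log R := by
    rw [Finset.abs_prod, Real.log_prod fun j _ => abs_ne_zero.2
      (Finset.prod_ne_zero_iff.1 (prod_pow_ne_zero hα) j (Finset.mem_univ j))]
    simp_rw [abs_pow, Real.log_pow]
    push_cast
    rw [Finset.sum_mul]
    exact Finset.sum_le_sum fun j _ => mul_le_mul_of_nonneg_left (hlog_le j) (Nat.cast_nonneg _)
  have hyoung := le_youngConj hnonneg hγ (s := lam * (∑ j, α j : ℕ)) (by positivity) (log_nonneg hR)
  rw [exp_log (by positivity)] at hyoung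
  rw [mul_log_div_Wmat hlam hα]
  nlinarith [mul_le_mul_of_nonneg_left hprod hlam.le]

lemma bddAbove_range_log_div_Wmat (hnonneg : ∀ t, 0 ≤ t → 0 ≤ ω t)
    (hγ : (fun t => log t) =o[atTop] ω) (hlam : 0 < lam) (t : EuclideanSpace ℝ (Fin d)) :
    BddAbove (Set.range fun α : {α : Fin d → ℕ // ∀ j, t j = 0 → α j = 0} =>
      log (|∏ j, t j ^ α.1 j| / Wmat ω d lam α.1)) := by
  refine ⟨ω (max ‖t‖ 1) / lam, ?_⟩
  rintro _ ⟨α, rfl⟩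
  exact (le_div_iff₀' hlam).2 (mul_log_div_Wmat_le hnonneg hγ hlam t α.2)

lemma log_div_Wmat_le_assocW (hnonneg : ∀ t, 0 ≤ t → 0 ≤ ω t)
    (hγ : (fun t => log t) =o[atTop] ω) (hlam : 0 < lam) (t : EuclideanSpace ℝ (Fin d))
    {α : Fin d → ℕ} (hα : ∀ j, t j = 0 → α j = 0) :
    log (|∏ j, t j ^ α j| / Wmat ω d lam α) ≤ assocW ω d lam t :=
  le_ciSup (bddAbove_range_log_div_Wmat hnonneg hγ hlam t) ⟨α, hα⟩

lemma mul_assocW_le (hnonneg : ∀ t, 0 ≤ t → 0 ≤ ω t) (hγ : (fun t => log t) =o[atTop] ω)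
    (hlam : 0 < lam) (t : EuclideanSpace ℝ (Fin d)) :
    lam * assocW ω d lam t ≤ ω (max ‖t‖ 1) := by
  have : Nonempty {α : Fin d → ℕ // ∀ j, t j = 0 → α j = 0} := ⟨⟨0, fun _ _ => rfl⟩⟩
  exact (le_div_iff₀' hlam).1 <| ciSup_le fun α =>
    (le_div_iff₀' hlam).2 (mul_log_div_Wmat_le hnonneg hγ hlam t α.2)

lemma assocW_nonneg (hnonneg : ∀ t, 0 ≤ t → 0 ≤ ω t) (hω1 : ω 1 = 0)
    (hγ : (fun t => log t) =o[atTop] ω) (hlam : 0 < lam) (t : EuclideanSpace ℝ (Fin d)) :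
    0 ≤ assocW ω d lam t := by
  simpa [Wmat, youngConj_zero hnonneg hω1 hγ] using
    log_div_Wmat_le_assocW hnonneg hγ hlam t (α := 0) fun _ _ => rfl

lemma apply_abs_sub_mul_log_le_mul_assocW (hmono : Monotone ω)
    (hnonneg : ∀ t, 0 ≤ t → 0 ≤ ω t) (hconv : ConvexOn ℝ (Set.Ici 0) (fun t => ω (exp t)))
    (hγ : (fun t => log t) =o[atTop] ω) (hlam : 0 < lam) {t : EuclideanSpace ℝ (Fin d)}
    {j : Fin d} (hj : 1 < |t j|) :
    ω |t j| - lam * log |t j| ≤ lam * assocW ω d lam t := by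
  obtain ⟨n, hn⟩ := exists_nat_apply_exp_sub_le hmono hconv hlam (log_pos hj)
  rw [exp_log (by linarith)] at hn
  have hα : ∀ i, t i = 0 → (Pi.single j n : Fin d → ℕ) i = 0 := fun i hi =>
    Pi.single_eq_of_ne (by rintro rfl; norm_num [hi] at hj) _
  have hprod : ∏ i, t i ^ Pi.single (M := fun _ => ℕ) j n i = t j ^ n := by
    simp [Pi.single_apply, pow_ite]
  calc ω |t j| - lam * log |t j| ≤ lam * n * log |t j| - youngConj ω (lam * n) := hn
    _ = lam * log (|∏ i, t i ^ Pi.single j n i| / Wmat ω d lam (Pi.single j n)) := by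
      rw [mul_log_div_Wmat hlam hα, hprod, Finset.sum_pi_single', abs_pow, Real.log_pow]
      simp only [Finset.mem_univ, if_true]
      ring
    _ ≤ lam * assocW ω d lam t :=
      mul_le_mul_of_nonneg_left (log_div_Wmat_le_assocW hnonneg hγ hlam t hα) hlam.le

lemma exists_apply_norm_le_mul_assocW_add (hmono : Monotone ω)
    (hnonneg : ∀ t, 0 ≤ t → 0 ≤ ω t) (hω1 : ω 1 = 0)
    (hconv : ConvexOn ℝ (Set.Ici 0) (fun t => ω (exp t)))
    (hγ : (fun t => log t) =o[atTop] ω) {L : ℝ} (hL : 1 ≤ L)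
    (hdb : ∀ t, 0 ≤ t → ω (2 * t) ≤ L * (ω t + 1)) (d : ℕ) (hlam : 0 < lam) :
    ∃ C, 0 < C ∧ ∀ t : EuclideanSpace ℝ (Fin d),
      ω ‖t‖ ≤ 2 * (2 * L) ^ d * lam * assocW ω d lam t + C := by
  obtain ⟨V, hV⟩ := ((eventually_mul_le_apply_exp hnonneg hγ (c := 2 * lam) (by positivity)).and
    (eventually_gt_atTop 0)).exists_forall_of_atTop
  have hK : 0 < (2 * L) ^ d := by positivity
  have hCV := hnonneg (2 ^ d * exp V) (by positivity)
  refine ⟨ω (2 ^ d * exp V) + (2 * L) ^ d, by positivity, fun t => ?_⟩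
  have hW := assocW_nonneg hnonneg hω1 hγ hlam t
  by_cases hsmall : ‖t‖ ≤ 2 ^ d * exp V
  · have := hmono hsmall
    have : 0 ≤ 2 * (2 * L) ^ d * lam * assocW ω d lam t := by positivity
    linarith
  obtain ⟨j, hj⟩ := EuclideanSpace.exists_norm_le_sqrt_card_mul_abs (t := t) (by
    rintro rfl
    exact hsmall (by simpa using (by positivity : 0 ≤ 2 ^ d * exp V)))
  have hsqrt : √(Fintype.card (Fin d)) ≤ 2 ^ d := by
    rw [Fintype.card_fin, Real.sqrt_le_left (by positivity)]
    calc (d : ℝ) ≤ 2 ^ d := by exact_mod_cast Nat.lt_two_pow_self.le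
      _ ≤ (2 ^ d) ^ 2 := le_self_pow₀ (one_le_pow₀ one_le_two) two_ne_zero
  have htj : ‖t‖ ≤ 2 ^ d * |t j| := hj.trans (mul_le_mul_of_nonneg_right hsqrt (abs_nonneg _))
  have hVj : exp V < |t j| := lt_of_mul_lt_mul_left ((not_le.1 hsmall).trans_le htj) (by positivity)
  obtain ⟨hlin, hpos⟩ := hV _ ((lt_log_iff_exp_lt ((exp_pos V).trans hVj)).2 hVj).le
  rw [exp_log ((exp_pos V).trans hVj)] at hlin
  have hkey := apply_abs_sub_mul_log_le_mul_assocW hmono hnonneg hconv hγ hlam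
    ((log_pos_iff (abs_nonneg _)).1 hpos)
  have hdouble := apply_two_pow_mul_add_one_le hnonneg hL hdb d (abs_nonneg (t j))
  calc ω ‖t‖ ≤ ω (2 ^ d * |t j|) := hmono htj
    _ ≤ (2 * L) ^ d * (ω |t j| + 1) := by linarith
    _ ≤ (2 * L) ^ d * (2 * lam * assocW ω d lam t + 1) := by gcongr; linarith
    _ ≤ 2 * (2 * L) ^ d * lam * assocW ω d lam t + (ω (2 ^ d * exp V) + (2 * L) ^ d) := by
      linarith

end AssociatedFunction

theorem stmt17_general (ω : ℝ → ℝ) (hmono : Monotone ω)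
    (hnonneg : ∀ t, 0 ≤ t → 0 ≤ ω t) (hω1 : ∀ t ∈ Set.Icc (0 : ℝ) 1, ω t = 0)
    (hα : ∃ L : ℝ, 1 ≤ L ∧ ∀ t : ℝ, 0 ≤ t → ω (2 * t) ≤ L * (ω t + 1))
    (hconv : ConvexOn ℝ (Set.Ici 0) (fun t => ω (Real.exp t)))
    (hγ : (fun t => Real.log t) =o[Filter.atTop] ω)
    (d : ℕ) :
    (∀ lam : ℝ, 0 < lam → ∀ t : EuclideanSpace ℝ (Fin d),
        lam * assocW ω d lam t ≤ ω ‖t‖) ∧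
    (∃ B : ℝ, 0 < B ∧ ∀ lam : ℝ, 0 < lam → ∃ C : ℝ, 0 < C ∧
        ∀ t : EuclideanSpace ℝ (Fin d), ω ‖t‖ ≤ B * lam * assocW ω d lam t + C) := by
  have hω_one : ω 1 = 0 := hω1 1 ⟨zero_le_one, le_rfl⟩
  have hω_max : ∀ x, 0 ≤ x → ω (max x 1) = ω x := fun x hx => by
    rcases le_total x 1 with h | h
    · rw [max_eq_right h, hω_one, hω1 x ⟨hx, h⟩]
    · rw [max_eq_left h]
  obtain ⟨L, hL, hdb⟩ := hα
  refine ⟨fun lam hlam t => ?_, 2 * (2 * L) ^ d, by positivity, fun lam hlam => ?_⟩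
  · exact hω_max ‖t‖ (norm_nonneg t) ▸ mul_assocW_le hnonneg hγ hlam t
  · exact exists_apply_norm_le_mul_assocW_add hmono hnonneg hω_one hconv hγ hL hdb d hlam

/-- `λ ω_{W^{(λ)}}(t) ≤ ω(|t|)` for all `t ∈ ℝ^d`, and there are `B > 0`
(independent of `λ`) and constants `C_λ > 0` with
`ω(|t|) ≤ B λ ω_{W^{(λ)}}(t) + C_λ`. -/
theorem stmt17 (ω : ℝ → ℝ) (hcont : Continuous ω) (hmono : Monotone ω)
    (hnonneg : ∀ t, 0 ≤ t → 0 ≤ ω t) (hω1 : ∀ t ∈ Set.Icc (0 : ℝ) 1, ω t = 0)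
    (hα : ∃ L : ℝ, 1 ≤ L ∧ ∀ t : ℝ, 0 ≤ t → ω (2 * t) ≤ L * (ω t + 1))
    (hconv : ConvexOn ℝ (Set.Ici 0) (fun t => ω (Real.exp t)))
    (hγ : (fun t => Real.log t) =o[Filter.atTop] ω)
    (d : ℕ) :
    (∀ lam : ℝ, 0 < lam → ∀ t : EuclideanSpace ℝ (Fin d),
        lam * assocW ω d lam t ≤ ω ‖t‖) ∧
    (∃ B : ℝ, 0 < B ∧ ∀ lam : ℝ, 0 < lam → ∃ C : ℝ, 0 < C ∧
        ∀ t : EuclideanSpace ℝ (Fin d), ω ‖t‖ ≤ B * lam * assocW ω d lam t + C) :=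
  stmt17_general ω hmono hnonneg hω1 hα hconv hγ d
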